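/- A quadratic equation cw² + (d−a)w − b = 0 over the bicomplex numbers, with c invertible, has at most 4 solutions in T, and the solutions are exactly the elements w₁e₁ + w₂e₂ where w₁ ranges over the (at most two) complex roots of c₁w² + (d₁−a₁)w − b₁ = 0 and w₂ over the complex roots of c₂w² + (d₂−a₂)w − b₂ = 0. -/
import Mathlib


/-- Bicomplex numbers `w = z₁ + z₂ i₂` with `z₁, z₂ ∈ ℂ(i₁)`. -/
structure Bicomplex where
  z1 : ℂ
  z2 : ℂ

namespace Bicomplex

@[ext] theorem ext' {w v : Bicomplex} (h1 : w.z1 = v.z1) (h2 : w.z2 = v.z2) : w = v := by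
  cases w; cases v; simp_all

instance : Zero Bicomplex := ⟨⟨0, 0⟩⟩
instance : One Bicomplex := ⟨⟨1, 0⟩⟩
instance : Add Bicomplex := ⟨fun w v => ⟨w.z1 + v.z1, w.z2 + v.z2⟩⟩
instance : Neg Bicomplex := ⟨fun w => ⟨-w.z1, -w.z2⟩⟩
instance : Mul Bicomplex := ⟨fun w v => ⟨w.z1 * v.z1 - w.z2 * v.z2, w.z1 * v.z2 + w.z2 * v.z1⟩⟩

@[simp] theorem zero_z1 : (0 : Bicomplex).z1 = 0 := rfl
@[simp] theorem zero_z2 : (0 : Bicomplex).z2 = 0 := rfl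
@[simp] theorem one_z1 : (1 : Bicomplex).z1 = 1 := rfl
@[simp] theorem one_z2 : (1 : Bicomplex).z2 = 0 := rfl
@[simp] theorem add_z1 (w v : Bicomplex) : (w + v).z1 = w.z1 + v.z1 := rfl
@[simp] theorem add_z2 (w v : Bicomplex) : (w + v).z2 = w.z2 + v.z2 := rfl
@[simp] theorem neg_z1 (w : Bicomplex) : (-w).z1 = -w.z1 := rfl
@[simp] theorem neg_z2 (w : Bicomplex) : (-w).z2 = -w.z2 := rfl
@[simp] theorem mul_z1 (w v : Bicomplex) : (w * v).z1 = w.z1 * v.z1 - w.z2 * v.z2 := rfl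
@[simp] theorem mul_z2 (w v : Bicomplex) : (w * v).z2 = w.z1 * v.z2 + w.z2 * v.z1 := rfl

instance : CommRing Bicomplex where
  add_assoc a b c := by ext <;> simp <;> ring
  zero_add a := by ext <;> simp
  add_zero a := by ext <;> simp
  add_comm a b := by ext <;> simp <;> ring
  neg_add_cancel a := by ext <;> simp
  left_distrib a b c := by ext <;> simp <;> ring
  right_distrib a b c := by ext <;> simp <;> ring
  zero_mul a := by ext <;> simp
  mul_zero a := by ext <;> simp
  mul_assoc a b c := by ext <;> simp <;> ring
  one_mul a := by ext <;> simp
  mul_one a := by ext <;> simp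
  mul_comm a b := by ext <;> simp <;> ring
  nsmul := nsmulRec
  zsmul := zsmulRec

/-- The imaginary unit `i₁`. -/
def i1 : Bicomplex := ⟨Complex.I, 0⟩
/-- The imaginary unit `i₂`. -/
def i2 : Bicomplex := ⟨0, 1⟩
/-- The hyperbolic unit `j = i₁ i₂`. -/
def jj : Bicomplex := ⟨0, Complex.I⟩
/-- The idempotent `e₁ = (1 + j)/2`. -/
noncomputable def e1 : Bicomplex := ⟨1/2, Complex.I/2⟩
/-- The idempotent `e₂ = (1 - j)/2`. -/
noncomputable def e2 : Bicomplex := ⟨1/2, -(Complex.I/2)⟩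
/-- The embedding `ℂ(i₁) → 𝕋`. -/
def toT (z : ℂ) : Bicomplex := ⟨z, 0⟩
/-- The complex square norm `CN(z₁ + z₂ i₂) = z₁² + z₂²`. -/
def CN (w : Bicomplex) : ℂ := w.z1 ^ 2 + w.z2 ^ 2
/-- The first idempotent projection `P₁(z₁ + z₂ i₂) = z₁ - z₂ i₁`. -/
def P1 (w : Bicomplex) : ℂ := w.z1 - w.z2 * Complex.I
/-- The second idempotent projection `P₂(z₁ + z₂ i₂) = z₁ + z₂ i₁`. -/
def P2 (w : Bicomplex) : ℂ := w.z1 + w.z2 * Complex.I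

end Bicomplex

namespace Bicomplex

lemma P1_add' (w v : Bicomplex) : P1 (w + v) = P1 w + P1 v := by simp [P1]; ring
lemma P2_add' (w v : Bicomplex) : P2 (w + v) = P2 w + P2 v := by simp [P2]; ring
lemma P1_neg' (w : Bicomplex) : P1 (-w) = -P1 w := by simp [P1]; ring
lemma P2_neg' (w : Bicomplex) : P2 (-w) = -P2 w := by simp [P2]; ring
lemma P1_sub' (w v : Bicomplex) : P1 (w - v) = P1 w - P1 v := by
  rw [sub_eq_add_neg, P1_add', P1_neg', sub_eq_add_neg]
lemma P2_sub' (w v : Bicomplex) : P2 (w - v) = P2 w - P2 v := by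
  rw [sub_eq_add_neg, P2_add', P2_neg', sub_eq_add_neg]
lemma P1_mul' (w v : Bicomplex) : P1 (w * v) = P1 w * P1 v := by
  simp only [P1, mul_z1, mul_z2]
  linear_combination (-(w.z2 * v.z2)) * Complex.I_sq
lemma P2_mul' (w v : Bicomplex) : P2 (w * v) = P2 w * P2 v := by
  simp only [P2, mul_z1, mul_z2]
  linear_combination (-(w.z2 * v.z2)) * Complex.I_sq
lemma P1_one' : P1 1 = 1 := by simp [P1]
lemma P2_one' : P2 1 = 1 := by simp [P2]
lemma P1_sq (w : Bicomplex) : P1 (w ^ 2) = (P1 w) ^ 2 := by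
  rw [pow_two, pow_two, P1_mul']
lemma P2_sq (w : Bicomplex) : P2 (w ^ 2) = (P2 w) ^ 2 := by
  rw [pow_two, pow_two, P2_mul']

lemma eq_zero_iff (x : Bicomplex) : x = 0 ↔ P1 x = 0 ∧ P2 x = 0 := by
  constructor
  · rintro rfl; simp [P1, P2]
  · rintro ⟨h1, h2⟩
    simp only [P1, P2] at h1 h2
    ext
    · show x.z1 = 0; linear_combination (h1 + h2) / 2
    · show x.z2 = 0; linear_combination (-Complex.I/2) * (h2 - h1) + x.z2 * Complex.I_sq

end Bicomplex

open Bicomplex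

/-- A bicomplex quadratic with invertible leading coefficient has at most 4 roots, which are
exactly the idempotent combinations of the complex roots of the projected quadratics. -/
theorem bicomplex_quadratic_solutions (a b c d : Bicomplex) (hc : IsUnit c) :
    (∀ w : Bicomplex, c * w ^ 2 + (d - a) * w - b = 0 ↔
      (P1 c * (P1 w) ^ 2 + (P1 d - P1 a) * P1 w - P1 b = 0 ∧
       P2 c * (P2 w) ^ 2 + (P2 d - P2 a) * P2 w - P2 b = 0)) ∧
    (∀ w : Bicomplex, w = toT (P1 w) * e1 + toT (P2 w) * e2) ∧
    {w : Bicomplex | c * w ^ 2 + (d - a) * w - b = 0}.Finite ∧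
    {w : Bicomplex | c * w ^ 2 + (d - a) * w - b = 0}.ncard ≤ 4 := by
  have hiff : ∀ w : Bicomplex, c * w ^ 2 + (d - a) * w - b = 0 ↔
      (P1 c * (P1 w) ^ 2 + (P1 d - P1 a) * P1 w - P1 b = 0 ∧
       P2 c * (P2 w) ^ 2 + (P2 d - P2 a) * P2 w - P2 b = 0) := by
    intro w
    rw [eq_zero_iff, P1_sub', P1_add', P1_mul', P1_mul', P1_sub', P1_sq,
      P2_sub', P2_add', P2_mul', P2_mul', P2_sub', P2_sq]
  refine ⟨hiff, ?_, ?_, ?_⟩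
  · intro w
    ext
    · show w.z1 = _
      simp only [toT, e1, e2, P1, P2, add_z1, mul_z1]
      ring
    · show w.z2 = _
      simp only [toT, e1, e2, P1, P2, add_z2, mul_z2]
      linear_combination w.z2 * Complex.I_sq
  all_goals {
    obtain ⟨v, hv⟩ := hc.exists_right_inv
    have hc1 : P1 c ≠ 0 := by
      intro h
      have := congrArg P1 hv
      rw [P1_mul', P1_one', h, zero_mul] at this
      exact zero_ne_one this
    have hc2 : P2 c ≠ 0 := by
      intro h
      have := congrArg P2 hv
      rw [P2_mul', P2_one', h, zero_mul] at this
      exact zero_ne_one this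
    set p : Polynomial ℂ := Polynomial.C (P1 c) * Polynomial.X ^ 2 +
      Polynomial.C (P1 d - P1 a) * Polynomial.X + Polynomial.C (-(P1 b)) with hp
    set q : Polynomial ℂ := Polynomial.C (P2 c) * Polynomial.X ^ 2 +
      Polynomial.C (P2 d - P2 a) * Polynomial.X + Polynomial.C (-(P2 b)) with hq
    have hpne : p ≠ 0 := by
      intro h
      have := Polynomial.natDegree_quadratic hc1 (b := P1 d - P1 a) (c := -(P1 b))
      rw [← hp, h] at this
      simp at this
    have hqne : q ≠ 0 := by
      intro h
      have := Polynomial.natDegree_quadratic hc2 (b := P2 d - P2 a) (c := -(P2 b))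
      rw [← hq, h] at this
      simp at this
    have hmaps : Set.MapsTo (fun w : Bicomplex => (P1 w, P2 w))
        {w : Bicomplex | c * w ^ 2 + (d - a) * w - b = 0}
        ↑(p.roots.toFinset ×ˢ q.roots.toFinset) := by
      intro w hw
      rw [Set.mem_setOf_eq, hiff] at hw
      simp only [Finset.coe_product, Set.mem_prod, Finset.mem_coe,
        Multiset.mem_toFinset, Polynomial.mem_roots', hp, hq]
      refine ⟨⟨hpne, ?_⟩, ⟨hqne, ?_⟩⟩
      · simp only [Polynomial.IsRoot.def, Polynomial.eval_add, Polynomial.eval_mul,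
          Polynomial.eval_pow, Polynomial.eval_C, Polynomial.eval_X]
        linear_combination hw.1
      · simp only [Polynomial.IsRoot.def, Polynomial.eval_add, Polynomial.eval_mul,
          Polynomial.eval_pow, Polynomial.eval_C, Polynomial.eval_X]
        linear_combination hw.2
    have hinj : Set.InjOn (fun w : Bicomplex => (P1 w, P2 w))
        {w : Bicomplex | c * w ^ 2 + (d - a) * w - b = 0} := by
      intro x _ y _ hxy
      simp only [Prod.mk.injEq] at hxy
      have : x - y = 0 := by
        rw [eq_zero_iff, P1_sub', P2_sub', hxy.1, hxy.2, sub_self, sub_self]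
        exact ⟨rfl, rfl⟩
      exact sub_eq_zero.mp this
    have hfin : {w : Bicomplex | c * w ^ 2 + (d - a) * w - b = 0}.Finite :=
      Set.Finite.of_finite_image (Set.Finite.subset
        (p.roots.toFinset ×ˢ q.roots.toFinset).finite_toSet (Set.image_subset_iff.mpr hmaps)) hinj
    first
    | exact hfin
    | { calc {w : Bicomplex | c * w ^ 2 + (d - a) * w - b = 0}.ncard
          ≤ (↑(p.roots.toFinset ×ˢ q.roots.toFinset) : Set (ℂ × ℂ)).ncard :=
            Set.ncard_le_ncard_of_injOn _ hmaps hinj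
              (p.roots.toFinset ×ˢ q.roots.toFinset).finite_toSet
        _ = (p.roots.toFinset ×ˢ q.roots.toFinset).card := Set.ncard_coe_finset _
        _ = p.roots.toFinset.card * q.roots.toFinset.card := Finset.card_product _ _
        _ ≤ 2 * 2 := by
            have h1 : p.roots.toFinset.card ≤ 2 := by
              refine le_trans (Multiset.toFinset_card_le _) ?_
              refine le_trans (Polynomial.card_roots' p) ?_
              rw [hp, Polynomial.natDegree_quadratic hc1]
            have h2 : q.roots.toFinset.card ≤ 2 := by
              refine le_trans (Multiset.toFinset_card_le _) ?_
              refine le_trans (Polynomial.card_roots' q) ?_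
              rw [hq, Polynomial.natDegree_quadratic hc2]
            exact Nat.mul_le_mul h1 h2
        _ ≤ 4 := by norm_num }
  }
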